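/- Let φ : M → M' be a morphism of modules over a discrete valuation ring 𝒪 with uniformizer ϖ and residue field k. Assume M is a free 𝒪-module and M' is 𝒪-torsion free. If the induced map φ ⊗ L on the fraction field L is surjective and the induced map φ ⊗ k modulo ϖ is injective, then φ is an isomorphism. -/

import Mathlib

/-!
Since `M'` has no `ϖ`-torsion, the injectivity of `φ ⊗ k` upgrades to: if `φ m = ϖ ^ n • y`
then `m = ϖ ^ n • m₀` with `φ m₀ = y`. Applied with `y = 0` this makes every element of `ker φ`
infinitely `ϖ`-divisible, hence zero in the free module `M`; applied to `ϖ ^ n • y = φ m`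
(surjectivity of `φ ⊗ L`) it produces a preimage of `y`.
-/

theorem Module.Free.eq_zero_of_forall_eq_pow_smul {R M : Type*} [CommRing R] [IsDomain R]
    [WfDvdMonoid R] [AddCommGroup M] [Module R M] [Module.Free R M] {ϖ : R} (hϖ : ¬IsUnit ϖ)
    {m : M} (hm : ∀ n : ℕ, ∃ m₀ : M, m = ϖ ^ n • m₀) : m = 0 := by
  let b := Module.Free.chooseBasis R M
  suffices ∀ i, b.repr m i = 0 from b.repr.map_eq_zero_iff.1 (Finsupp.ext this)
  intro i
  by_contra hi
  refine FiniteMultiplicity.not_iff_forall.2 (fun n => ?_) (FiniteMultiplicity.of_not_isUnit hϖ hi)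
  obtain ⟨m₀, rfl⟩ := hm n
  exact ⟨b.repr m₀ i, by simp⟩

section LiftThroughPowers

variable {R M M' : Type*} [Semiring R] [AddCommMonoid M] [Module R M] [AddCommMonoid M']
  [Module R M'] {ϖ : R} (φ : M →ₗ[R] M')

theorem LinearMap.exists_eq_smul_and_map_eq (hreg : IsSMulRegular M' ϖ)
    (hk : ∀ m : M, (∃ y : M', φ m = ϖ • y) → ∃ m₀ : M, m = ϖ • m₀)
    {m : M} {y : M'} (h : φ m = ϖ • y) : ∃ m₀ : M, m = ϖ • m₀ ∧ φ m₀ = y := by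
  obtain ⟨m₀, rfl⟩ := hk m ⟨y, h⟩
  have : ϖ • φ m₀ = ϖ • y := by rw [← h, map_smul]
  exact ⟨m₀, rfl, hreg this⟩

theorem LinearMap.exists_eq_pow_smul_and_map_eq (hreg : IsSMulRegular M' ϖ)
    (hk : ∀ m : M, (∃ y : M', φ m = ϖ • y) → ∃ m₀ : M, m = ϖ • m₀)
    {n : ℕ} {m : M} {y : M'} (h : φ m = ϖ ^ n • y) : ∃ m₀ : M, m = ϖ ^ n • m₀ ∧ φ m₀ = y := by
  induction n generalizing m with
  | zero => exact ⟨m, by rw [pow_zero, one_smul], by simpa using h⟩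
  | succ n ih =>
    rw [pow_succ', mul_smul] at h
    obtain ⟨m₁, rfl, hm₁⟩ := φ.exists_eq_smul_and_map_eq hreg hk h
    obtain ⟨m₀, rfl, hm₀⟩ := ih hm₁
    exact ⟨m₀, by rw [pow_succ', mul_smul], hm₀⟩

end LiftThroughPowers

/-- Let `φ : M → M'` be a morphism of modules over a DVR `𝒪` with
uniformizer `ϖ`. If `M` is free, `M'` is torsion free, `φ ⊗ L` is surjective
(every element of `M'` is hit after multiplying by a power of `ϖ`) and `φ ⊗ k` is
injective (`φ m ∈ ϖM'` implies `m ∈ ϖM`), then `φ` is an isomorphism. -/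
theorem stmt0 {O : Type*} [CommRing O] [IsDomain O] [IsDiscreteValuationRing O]
    (ϖ : O) (hϖ : Irreducible ϖ)
    {M M' : Type*} [AddCommGroup M] [Module O M] [AddCommGroup M'] [Module O M']
    [Module.Free O M]
    (htf : ∀ (c : O) (m' : M'), c • m' = 0 → c = 0 ∨ m' = 0)
    (φ : M →ₗ[O] M')
    (hL : ∀ m' : M', ∃ (m : M) (n : ℕ), ϖ ^ n • m' = φ m)
    (hk : ∀ m : M, (∃ m'' : M', φ m = ϖ • m'') → ∃ m₀ : M, m = ϖ • m₀) :
    Function.Bijective φ := by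
  have hreg : IsSMulRegular M' ϖ :=
    .of_right_eq_zero_of_smul fun y hy => (htf ϖ y hy).resolve_left hϖ.ne_zero
  refine ⟨(injective_iff_map_eq_zero φ).2 fun m hm => ?_, fun y => ?_⟩
  · refine Module.Free.eq_zero_of_forall_eq_pow_smul hϖ.not_isUnit fun n => ?_
    have : φ m = ϖ ^ n • 0 := by rw [hm, smul_zero]
    obtain ⟨m₀, hm₀, -⟩ := φ.exists_eq_pow_smul_and_map_eq hreg hk this
    exact ⟨m₀, hm₀⟩
  · obtain ⟨m, n, hm⟩ := hL y
    obtain ⟨m₀, -, hm₀⟩ := φ.exists_eq_pow_smul_and_map_eq hreg hk hm.symm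
    exact ⟨m₀, hm₀⟩
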